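/- Let (P₁, V₁) be a locally convex cone and (P₂, V₂) a separated full locally convex cone, complete with respect to the symmetric topology. If f : P₁ → P₂ satisfies f(αx+y) ∈ v(αf(x)+f(y))v for some bounded v ∈ V₂, all x, y ∈ P₁, and all real α > 0, then there exists a unique mapping L : P₁ → P₂, additive and satisfying L(αx) = αL(x) for all α > 0, and a positive real γ such that L(x) ∈ (γv)(f(x))(γv) for all x ∈ P₁. -/

import Mathlib

open scoped NNReal

section Defs
variable {P : Type*} [AddCommMonoid P] [Preorder P]

/-- The closure of a point: intersection of all its upper neighborhoods. -/
def ptCl (V : Set P) (a : P) : Set P := {b | ∀ v ∈ V, b ≤ a + v}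

/-- A locally convex cone is separated if equal closures imply equality. -/
def IsSeparated (V : Set P) : Prop := ∀ a b : P, ptCl V a = ptCl V b → a = b

/-- Abstract 0-neighborhood system. -/
def IsNbhdSystem [SMul ℝ≥0 P] (V : Set P) : Prop :=
  (∀ v ∈ V, 0 < v) ∧
  (∀ u ∈ V, ∀ v ∈ V, ∃ w ∈ V, w ≤ u ∧ w ≤ v) ∧
  (∀ u ∈ V, ∀ v ∈ V, u + v ∈ V) ∧
  (∀ v ∈ V, ∀ c : ℝ≥0, 0 < c → c • v ∈ V)

/-- Compatibility of the preorder with addition and nonnegative scalar multiplication. -/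
def IsOrderedCone (P : Type*) [AddCommMonoid P] [Preorder P] [SMul ℝ≥0 P] : Prop :=
  (∀ a b c : P, a ≤ b → a + c ≤ b + c) ∧
  (∀ (c : ℝ≥0) (a b : P), a ≤ b → c • a ≤ c • b)

/-- All elements are bounded below (full locally convex cone condition). -/
def IsLowerBddCone [SMul ℝ≥0 P] (V : Set P) : Prop :=
  ∀ a : P, ∀ v ∈ V, ∃ ρ : ℝ≥0, 0 < ρ ∧ (0 : P) ≤ a + ρ • v

/-- An element is bounded: upper and lower bounded. -/
def BoundedElem [SMul ℝ≥0 P] (V : Set P) (a : P) : Prop :=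
  (∀ v ∈ V, ∃ c : ℝ≥0, 0 < c ∧ a ≤ c • v) ∧
  (∀ v ∈ V, ∃ ρ : ℝ≥0, 0 < ρ ∧ (0 : P) ≤ a + ρ • v)

/-- Completeness under the symmetric topology: every symmetric Cauchy net converges. -/
def SymComplete (V : Set P) : Prop :=
  ∀ (ι : Type) [Preorder ι] [Nonempty ι], IsDirected ι (· ≤ ·) →
    ∀ a : ι → P, (∀ v ∈ V, ∃ i0, ∀ i j, i0 ≤ i → i0 ≤ j → a i ≤ a j + v) →
      ∃ l : P, ∀ v ∈ V, ∃ i0, ∀ i, i0 ≤ i → a i ≤ l + v ∧ l ≤ a i + v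

end Defs

section Aux
variable {P : Type*} [AddCommMonoid P] [Module ℝ≥0 P] [Preorder P]

lemma aux_addc (hoc : IsOrderedCone P) {a b : P} (c : P) (h : a ≤ b) : a + c ≤ b + c :=
  hoc.1 a b c h

lemma aux_add_le_add (hoc : IsOrderedCone P) {a b c d : P} (h1 : a ≤ b) (h2 : c ≤ d) :
    a + c ≤ b + d := by
  calc a + c ≤ b + c := hoc.1 _ _ _ h1
    _ = c + b := add_comm _ _
    _ ≤ d + b := hoc.1 _ _ _ h2
    _ = b + d := add_comm _ _

lemma aux_le_add (hoc : IsOrderedCone P) {d : P} (a : P) (h : (0:P) ≤ d) : a ≤ a + d := by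
  have := hoc.1 0 d a h
  simpa [add_comm] using this

lemma aux_smul_mono (hoc : IsOrderedCone P) {s t : ℝ≥0} {x : P} (hst : s ≤ t) (hx : (0:P) ≤ x) :
    s • x ≤ t • x := by
  have h0 : (0:P) ≤ (t - s) • x := by simpa using hoc.2 (t - s) 0 x hx
  calc s • x ≤ s • x + (t - s) • x := aux_le_add hoc _ h0
    _ = (s + (t - s)) • x := (add_smul _ _ _).symm
    _ = t • x := by rw [add_tsub_cancel_of_le hst]

lemma aux_sep {V : Set P} (hsep : IsSeparated V) (hV : IsNbhdSystem V) (hoc : IsOrderedCone P)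
    {a b : P} (h : ∀ w ∈ V, a ≤ b + w ∧ b ≤ a + w) : a = b := by
  apply hsep
  have key : ∀ p q : P, (∀ w ∈ V, p ≤ q + w) → ∀ c, c ∈ ptCl V p → c ∈ ptCl V q := by
    intro p q hpq c hc w hw
    have h2 : (2⁻¹ : ℝ≥0) • w ∈ V := hV.2.2.2 w hw 2⁻¹ (by norm_num)
    calc c ≤ p + 2⁻¹ • w := hc _ h2
      _ ≤ (q + 2⁻¹ • w) + 2⁻¹ • w := hoc.1 _ _ _ (hpq _ h2)
      _ = q + w := by rw [add_assoc, ← add_smul, show (2⁻¹ + 2⁻¹ : ℝ≥0) = 1 by rw [← two_mul, mul_inv_cancel₀ (two_ne_zero)], one_smul]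
  ext c
  exact ⟨key a b (fun w hw => (h w hw).1) c, key b a (fun w hw => (h w hw).2) c⟩
end Aux

/-- Auxiliary approximating sequence. -/
noncomputable def appx {P₁ P₂ : Type*} [SMul ℝ≥0 P₁] [SMul ℝ≥0 P₂] (f : P₁ → P₂) (n : ℕ) (x : P₁) : P₂ :=
  ((2:ℝ≥0)^n)⁻¹ • f ((2:ℝ≥0)^n • x)

/-- Hyers–Ulam stability of linear operators in locally convex cones. -/
theorem linear_stability {P₁ P₂ : Type*}
    [AddCommMonoid P₁] [Module ℝ≥0 P₁] [Preorder P₁]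
    [AddCommMonoid P₂] [Module ℝ≥0 P₂] [Preorder P₂]
    (V₁ : Set P₁) (V₂ : Set P₂)
    (hoc₁ : IsOrderedCone P₁) (hV₁ : IsNbhdSystem V₁) (hlb₁ : IsLowerBddCone V₁)
    (hoc₂ : IsOrderedCone P₂) (hV₂ : IsNbhdSystem V₂) (hlb₂ : IsLowerBddCone V₂)
    (hsep : IsSeparated V₂) (hcomp : SymComplete V₂)
    (f : P₁ → P₂) (v : P₂) (hv : v ∈ V₂) (hvbdd : BoundedElem V₂ v)
    (happrox : ∀ x y : P₁, ∀ α : ℝ≥0, 0 < α →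
      f (α • x + y) ≤ α • f x + f y + v ∧ α • f x + f y ≤ f (α • x + y) + v) :
    ∃ L : P₁ → P₂,
      (∀ x y : P₁, L (x + y) = L x + L y) ∧
      (∀ (α : ℝ≥0) (x : P₁), 0 < α → L (α • x) = α • L x) ∧
      (∃ γ : ℝ≥0, 0 < γ ∧ ∀ x : P₁, L x ≤ f x + γ • v ∧ f x ≤ L x + γ • v) ∧
      (∀ L' : P₁ → P₂, (∀ x y : P₁, L' (x + y) = L' x + L' y) →
        (∀ (α : ℝ≥0) (x : P₁), 0 < α → L' (α • x) = α • L' x) →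
        (∃ γ' : ℝ≥0, 0 < γ' ∧ ∀ x : P₁, L' x ≤ f x + γ' • v ∧ f x ≤ L' x + γ' • v) →
        L' = L) := by
  classical
  obtain ⟨hvub, -⟩ := hvbdd
  have hv0 : (0:P₂) ≤ v := (hV₂.1 v hv).le
  have hw0 : ∀ w ∈ V₂, (0:P₂) ≤ w := fun w hw => (hV₂.1 w hw).le
  have hsv0 : ∀ s : ℝ≥0, (0:P₂) ≤ s • v := by
    intro s; simpa using hoc₂.2 s 0 v hv0
  -- small multiples of v are below any neighborhood
  have hsmall : ∀ w ∈ V₂, ∃ c : ℝ≥0, 0 < c ∧ ∀ s : ℝ≥0, s * c ≤ 1 → s • v ≤ w := by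
    intro w hw
    obtain ⟨c, hc, hvc⟩ := hvub w hw
    refine ⟨c, hc, fun s hs => ?_⟩
    calc s • v ≤ s • (c • w) := hoc₂.2 s _ _ hvc
      _ = (s * c) • w := smul_smul _ _ _
      _ ≤ (1:ℝ≥0) • w := aux_smul_mono hoc₂ hs (hw0 w hw)
      _ = w := one_smul _ _
  -- approximate homogeneity of f
  have hom : ∀ (x : P₁) (β : ℝ≥0), 0 < β →
      f (β • x) ≤ β • f x + v ∧ β • f x ≤ f (β • x) + v := by
    have homgt : ∀ (x : P₁) (β : ℝ≥0), 1 < β →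
        f (β • x) ≤ β • f x + v ∧ β • f x ≤ f (β • x) + v := by
      intro x β hβ
      have h1 : (0:ℝ≥0) < β - 1 := tsub_pos_of_lt hβ
      have h := happrox x x (β - 1) h1
      have hx : (β - 1) • x + x = β • x := by
        nth_rw 2 [← one_smul ℝ≥0 x]
        rw [← add_smul, tsub_add_cancel_of_le hβ.le]
      have hfx : (β - 1) • f x + f x = β • f x := by
        nth_rw 2 [← one_smul ℝ≥0 (f x)]
        rw [← add_smul, tsub_add_cancel_of_le hβ.le]
      rw [hx, hfx] at h
      exact h
    intro x β hβ
    rcases lt_trichotomy β 1 with h | h | h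
    · have hβi : 1 < β⁻¹ := (one_lt_inv₀ hβ).2 h
      have hc := homgt (β • x) β⁻¹ hβi
      rw [inv_smul_smul₀ hβ.ne' x] at hc
      have hβv : β • v ≤ v := by
        have := aux_smul_mono hoc₂ h.le hv0
        simpa using this
      constructor
      · have h2 := hoc₂.2 β _ _ hc.2
        rw [smul_inv_smul₀ hβ.ne', smul_add] at h2
        exact h2.trans (aux_add_le_add hoc₂ le_rfl hβv)
      · have h2 := hoc₂.2 β _ _ hc.1
        rw [smul_add, smul_inv_smul₀ hβ.ne'] at h2
        exact h2.trans (aux_add_le_add hoc₂ le_rfl hβv)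
    · subst h
      rw [one_smul, one_smul]
      exact ⟨aux_le_add hoc₂ _ hv0, aux_le_add hoc₂ _ hv0⟩
    · exact homgt x β h
  set a : ℕ → P₁ → P₂ := appx f with ha_def
  have ha : ∀ n x, a n x = ((2:ℝ≥0)^n)⁻¹ • f ((2:ℝ≥0)^n • x) := fun n x => rfl
  have ha0 : ∀ x, a 0 x = f x := by intro x; rw [ha]; simp
  have hpow : ∀ n : ℕ, ((2:ℝ≥0)^(n+1))⁻¹ * 2 = ((2:ℝ≥0)^n)⁻¹ := by
    intro n
    rw [pow_succ, mul_inv, mul_assoc, inv_mul_cancel₀ (two_ne_zero), mul_one]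
  have hhalf : ∀ n : ℕ, ((2:ℝ≥0)^(n+1))⁻¹ + ((2:ℝ≥0)^(n+1))⁻¹ = ((2:ℝ≥0)^n)⁻¹ := by
    intro n; rw [← two_mul, mul_comm, hpow n]
  -- one step estimate
  have step : ∀ (n : ℕ) (x : P₁),
      a (n+1) x ≤ a n x + ((2:ℝ≥0)^(n+1))⁻¹ • v ∧
      a n x ≤ a (n+1) x + ((2:ℝ≥0)^(n+1))⁻¹ • v := by
    intro n x
    have h2 := hom ((2:ℝ≥0)^n • x) 2 (by norm_num)
    have hc : (2:ℝ≥0) • ((2:ℝ≥0)^n • x) = (2:ℝ≥0)^(n+1) • x := by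
      rw [smul_smul, ← pow_succ']
    rw [hc] at h2
    constructor
    · have h3 := hoc₂.2 ((2:ℝ≥0)^(n+1))⁻¹ _ _ h2.1
      rw [smul_add, smul_smul, hpow n] at h3
      exact h3
    · have h3 := hoc₂.2 ((2:ℝ≥0)^(n+1))⁻¹ _ _ h2.2
      rw [smul_add, smul_smul, hpow n] at h3
      exact h3
  -- telescoping estimate
  have tel : ∀ (k n : ℕ) (x : P₁),
      a (n+k) x ≤ a n x + ((2:ℝ≥0)^n)⁻¹ • v ∧
      a n x ≤ a (n+k) x + ((2:ℝ≥0)^n)⁻¹ • v := by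
    intro k
    induction k with
    | zero => exact fun n x => ⟨aux_le_add hoc₂ _ (hsv0 _), aux_le_add hoc₂ _ (hsv0 _)⟩
    | succ k ih =>
      intro n x
      have h1 := ih (n+1) x
      have h2 := step n x
      have he : n + (k+1) = (n+1) + k := by omega
      constructor
      · calc a (n+(k+1)) x = a ((n+1)+k) x := by rw [he]
          _ ≤ a (n+1) x + ((2:ℝ≥0)^(n+1))⁻¹ • v := h1.1
          _ ≤ (a n x + ((2:ℝ≥0)^(n+1))⁻¹ • v) + ((2:ℝ≥0)^(n+1))⁻¹ • v :=
              aux_addc hoc₂ _ h2.1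
          _ = a n x + (((2:ℝ≥0)^(n+1))⁻¹ • v + ((2:ℝ≥0)^(n+1))⁻¹ • v) := add_assoc _ _ _
          _ = a n x + ((2:ℝ≥0)^n)⁻¹ • v := by rw [← add_smul, hhalf n]
      · calc a n x ≤ a (n+1) x + ((2:ℝ≥0)^(n+1))⁻¹ • v := h2.2
          _ ≤ (a ((n+1)+k) x + ((2:ℝ≥0)^(n+1))⁻¹ • v) + ((2:ℝ≥0)^(n+1))⁻¹ • v :=
              aux_addc hoc₂ _ h1.2
          _ = a ((n+1)+k) x + ((2:ℝ≥0)^n)⁻¹ • v := by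
              rw [add_assoc, ← add_smul, hhalf n]
          _ = a (n+(k+1)) x + ((2:ℝ≥0)^n)⁻¹ • v := by rw [he]
  -- Cauchy property
  have cauchy : ∀ x : P₁, ∀ w ∈ V₂, ∃ i0 : ℕ, ∀ i j, i0 ≤ i → i0 ≤ j →
      a i x ≤ a j x + w := by
    intro x w hw
    obtain ⟨c, hc, hcs⟩ := hsmall w hw
    obtain ⟨n0, hn0⟩ : ∃ n0 : ℕ, 2 * c < 2^n0 := pow_unbounded_of_one_lt _ one_lt_two
    refine ⟨n0, fun i j hi hj => ?_⟩
    set m := min i j with hm_def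
    have hm : n0 ≤ m := le_min hi hj
    have h1 := (tel (i - m) m x).1
    have h2 := (tel (j - m) m x).2
    rw [show m + (i - m) = i from by omega] at h1
    rw [show m + (j - m) = j from by omega] at h2
    have key : ((2:ℝ≥0)^m)⁻¹ • v + ((2:ℝ≥0)^m)⁻¹ • v ≤ w := by
      rw [← add_smul]
      apply hcs
      have h2m : (2:ℝ≥0)^n0 ≤ 2^m := pow_le_pow_right₀ one_le_two hm
      have h2c : 2 * c ≤ (2:ℝ≥0)^m := le_trans hn0.le h2m
      calc (((2:ℝ≥0)^m)⁻¹ + ((2:ℝ≥0)^m)⁻¹) * c = (2*c) * ((2:ℝ≥0)^m)⁻¹ := by ring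
        _ ≤ (2:ℝ≥0)^m * ((2:ℝ≥0)^m)⁻¹ := mul_le_mul_left h2c _
        _ = 1 := mul_inv_cancel₀ (pow_ne_zero _ two_ne_zero)
    calc a i x ≤ a m x + ((2:ℝ≥0)^m)⁻¹ • v := h1
      _ ≤ (a j x + ((2:ℝ≥0)^m)⁻¹ • v) + ((2:ℝ≥0)^m)⁻¹ • v := aux_addc hoc₂ _ h2
      _ = a j x + (((2:ℝ≥0)^m)⁻¹ • v + ((2:ℝ≥0)^m)⁻¹ • v) := add_assoc _ _ _
      _ ≤ a j x + w := aux_add_le_add hoc₂ le_rfl key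
  -- limits exist
  have hlim : ∀ x : P₁, ∃ l : P₂, ∀ w ∈ V₂, ∃ i0 : ℕ, ∀ i, i0 ≤ i →
      a i x ≤ l + w ∧ l ≤ a i x + w :=
    fun x => hcomp ℕ inferInstance (fun n => a n x) (cauchy x)
  choose L hL using hlim
  -- closeness to f with γ = 2
  have hclose : ∀ x : P₁, L x ≤ f x + (2:ℝ≥0) • v ∧ f x ≤ L x + (2:ℝ≥0) • v := by
    intro x
    obtain ⟨i0, hi0⟩ := hL x v hv
    have h1 := hi0 i0 le_rfl
    have ht := tel i0 0 x
    rw [ha0 x, Nat.zero_add] at ht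
    simp only [pow_zero, inv_one, one_smul] at ht
    have h2v : v + v = (2:ℝ≥0) • v := (two_smul ℝ≥0 v).symm
    constructor
    · calc L x ≤ a i0 x + v := h1.2
        _ ≤ (f x + v) + v := aux_addc hoc₂ _ ht.1
        _ = f x + (2:ℝ≥0) • v := by rw [add_assoc, h2v]
    · calc f x ≤ a i0 x + v := ht.2
        _ ≤ (L x + v) + v := aux_addc hoc₂ _ h1.1
        _ = L x + (2:ℝ≥0) • v := by rw [add_assoc, h2v]
  -- additivity
  have hadd : ∀ x y : P₁, L (x + y) = L x + L y := by
    intro x y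
    apply aux_sep hsep hV₂ hoc₂
    intro w hw
    have hu : (4⁻¹:ℝ≥0) • w ∈ V₂ := hV₂.2.2.2 w hw _ (by norm_num)
    set u := (4⁻¹:ℝ≥0) • w with hu_def
    obtain ⟨c, hc, hcs⟩ := hsmall w hw
    obtain ⟨n1, hn1⟩ : ∃ n : ℕ, 4 * c < 2^n := pow_unbounded_of_one_lt _ one_lt_two
    obtain ⟨m1, e1⟩ := hL (x+y) u hu
    obtain ⟨m2, e2⟩ := hL x u hu
    obtain ⟨m3, e3⟩ := hL y u hu
    set n := max (max m1 m2) (max m3 n1) with hn_def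
    have hm1 : m1 ≤ n := le_trans (le_max_left _ _) (le_max_left _ _)
    have hm2 : m2 ≤ n := le_trans (le_max_right _ _) (le_max_left _ _)
    have hm3 : m3 ≤ n := le_trans (le_max_left _ _) (le_max_right _ _)
    have hn1' : n1 ≤ n := le_trans (le_max_right _ _) (le_max_right _ _)
    have E1 := e1 n hm1
    have E2 := e2 n hm2
    have E3 := e3 n hm3
    -- approximate additivity at level n
    have hap := happrox ((2:ℝ≥0)^n • x) ((2:ℝ≥0)^n • y) 1 one_pos
    rw [one_smul, one_smul] at hap
    have hsx : (2:ℝ≥0)^n • (x+y) = (2:ℝ≥0)^n • x + (2:ℝ≥0)^n • y := smul_add _ _ _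
    have han1 : a n (x+y) ≤ a n x + a n y + ((2:ℝ≥0)^n)⁻¹ • v := by
      have h3 := hoc₂.2 ((2:ℝ≥0)^n)⁻¹ _ _ hap.1
      rw [smul_add, smul_add] at h3
      rw [ha, hsx]
      exact h3
    have han2 : a n x + a n y ≤ a n (x+y) + ((2:ℝ≥0)^n)⁻¹ • v := by
      have h3 := hoc₂.2 ((2:ℝ≥0)^n)⁻¹ _ _ hap.2
      rw [smul_add, smul_add] at h3
      rw [ha (n := n) (x := x+y), hsx]
      exact h3
    -- small v term
    have hvsmall : ((2:ℝ≥0)^n)⁻¹ • v ≤ u := by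
      have h4 : ((4:ℝ≥0) * ((2:ℝ≥0)^n)⁻¹) • v ≤ w := by
        apply hcs
        have h2m : (2:ℝ≥0)^n1 ≤ 2^n := pow_le_pow_right₀ one_le_two hn1'
        have h2c : 4 * c ≤ (2:ℝ≥0)^n := le_trans hn1.le h2m
        calc (4:ℝ≥0) * ((2:ℝ≥0)^n)⁻¹ * c = (4*c) * ((2:ℝ≥0)^n)⁻¹ := by ring
          _ ≤ (2:ℝ≥0)^n * ((2:ℝ≥0)^n)⁻¹ := mul_le_mul_left h2c _
          _ = 1 := mul_inv_cancel₀ (pow_ne_zero _ two_ne_zero)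
      have h5 := hoc₂.2 (4⁻¹:ℝ≥0) _ _ h4
      rw [smul_smul, show (4⁻¹:ℝ≥0) * (4 * ((2:ℝ≥0)^n)⁻¹) = ((2:ℝ≥0)^n)⁻¹ by
        rw [← mul_assoc, inv_mul_cancel₀ (by norm_num), one_mul]] at h5
      exact h5
    have h4u : u + u + u + u = w := by
      rw [hu_def, ← add_smul, ← add_smul, ← add_smul,
        show (4⁻¹ + 4⁻¹ + 4⁻¹ + 4⁻¹ : ℝ≥0) = 1 by
          rw [show (4⁻¹ + 4⁻¹ + 4⁻¹ + 4⁻¹ : ℝ≥0) = 4⁻¹ * 4 by ring, inv_mul_cancel₀ (by norm_num)],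
        one_smul]
    constructor
    · calc L (x+y) ≤ a n (x+y) + u := E1.2
        _ ≤ (a n x + a n y + ((2:ℝ≥0)^n)⁻¹ • v) + u := aux_addc hoc₂ _ han1
        _ ≤ ((L x + u) + (L y + u) + u) + u :=
            aux_addc hoc₂ _ (aux_add_le_add hoc₂ (aux_add_le_add hoc₂ E2.1 E3.1) hvsmall)
        _ = (L x + L y) + (u + u + u + u) := by abel
        _ = L x + L y + w := by rw [h4u]
    · calc L x + L y ≤ (a n x + u) + (a n y + u) := aux_add_le_add hoc₂ E2.2 E3.2
        _ = (a n x + a n y) + (u + u) := by abel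
        _ ≤ (a n (x+y) + ((2:ℝ≥0)^n)⁻¹ • v) + (u + u) := aux_addc hoc₂ _ han2
        _ ≤ ((L (x+y) + u) + u) + (u + u) :=
            aux_addc hoc₂ _ (aux_add_le_add hoc₂ E1.1 hvsmall)
        _ = L (x+y) + (u + u + u + u) := by abel
        _ = L (x+y) + w := by rw [h4u]
  -- homogeneity
  have hhom : ∀ (β : ℝ≥0) (x : P₁), 0 < β → L (β • x) = β • L x := by
    intro β x hβ
    apply aux_sep hsep hV₂ hoc₂
    intro w hw
    have hu : (3⁻¹:ℝ≥0) • w ∈ V₂ := hV₂.2.2.2 w hw _ (by norm_num)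
    have hu' : ((3⁻¹ * β⁻¹ :ℝ≥0)) • w ∈ V₂ := by
      apply hV₂.2.2.2 w hw
      positivity
    set u := (3⁻¹:ℝ≥0) • w with hu_def
    set u' := ((3⁻¹ * β⁻¹ :ℝ≥0)) • w with hu'_def
    have hβu' : β • u' = u := by
      rw [hu'_def, hu_def, smul_smul, ← mul_assoc, mul_comm β, mul_assoc,
        mul_inv_cancel₀ hβ.ne', mul_one]
    obtain ⟨c, hc, hcs⟩ := hsmall w hw
    obtain ⟨n1, hn1⟩ : ∃ n : ℕ, 3 * c < 2^n := pow_unbounded_of_one_lt _ one_lt_two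
    obtain ⟨m1, e1⟩ := hL (β • x) u hu
    obtain ⟨m2, e2⟩ := hL x u' hu'
    set n := max (max m1 m2) n1 with hn_def
    have hm1 : m1 ≤ n := le_trans (le_max_left _ _) (le_max_left _ _)
    have hm2 : m2 ≤ n := le_trans (le_max_right _ _) (le_max_left _ _)
    have hn1' : n1 ≤ n := le_max_right _ _
    have E1 := e1 n hm1
    have E2 := e2 n hm2
    have hvsmall : ((2:ℝ≥0)^n)⁻¹ • v ≤ u := by
      have h4 : ((3:ℝ≥0) * ((2:ℝ≥0)^n)⁻¹) • v ≤ w := by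
        apply hcs
        have h2m : (2:ℝ≥0)^n1 ≤ 2^n := pow_le_pow_right₀ one_le_two hn1'
        have h2c : 3 * c ≤ (2:ℝ≥0)^n := le_trans hn1.le h2m
        calc (3:ℝ≥0) * ((2:ℝ≥0)^n)⁻¹ * c = (3*c) * ((2:ℝ≥0)^n)⁻¹ := by ring
          _ ≤ (2:ℝ≥0)^n * ((2:ℝ≥0)^n)⁻¹ := mul_le_mul_left h2c _
          _ = 1 := mul_inv_cancel₀ (pow_ne_zero _ two_ne_zero)
      have h5 := hoc₂.2 (3⁻¹:ℝ≥0) _ _ h4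
      rw [smul_smul, show (3⁻¹:ℝ≥0) * (3 * ((2:ℝ≥0)^n)⁻¹) = ((2:ℝ≥0)^n)⁻¹ by
        rw [← mul_assoc, inv_mul_cancel₀ (by norm_num), one_mul]] at h5
      exact h5
    have h3u : u + u + u = w := by
      rw [hu_def, ← add_smul, ← add_smul,
        show (3⁻¹ + 3⁻¹ + 3⁻¹ : ℝ≥0) = 1 by
          rw [show (3⁻¹ + 3⁻¹ + 3⁻¹ : ℝ≥0) = 3⁻¹ * 3 by ring, inv_mul_cancel₀ (by norm_num)],
        one_smul]
    -- approximate homogeneity at level n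
    have hh := hom ((2:ℝ≥0)^n • x) β hβ
    have hcm : (2:ℝ≥0)^n • (β • x) = β • ((2:ℝ≥0)^n • x) := smul_comm _ _ _
    have hsc : ∀ z : P₂, ((2:ℝ≥0)^n)⁻¹ • (β • z) = β • (((2:ℝ≥0)^n)⁻¹ • z) := by
      intro z; rw [smul_smul, mul_comm, ← smul_smul]
    have key1 : a n (β • x) ≤ β • a n x + ((2:ℝ≥0)^n)⁻¹ • v := by
      have h3 := hoc₂.2 ((2:ℝ≥0)^n)⁻¹ _ _ hh.1
      rw [smul_add, hsc] at h3
      rw [ha, hcm]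
      exact h3
    have key2 : β • a n x ≤ a n (β • x) + ((2:ℝ≥0)^n)⁻¹ • v := by
      have h3 := hoc₂.2 ((2:ℝ≥0)^n)⁻¹ _ _ hh.2
      rw [smul_add, hsc] at h3
      rw [ha n (β • x), hcm, ha n x]
      exact h3
    constructor
    · calc L (β • x) ≤ a n (β • x) + u := E1.2
        _ ≤ (β • a n x + ((2:ℝ≥0)^n)⁻¹ • v) + u := aux_addc hoc₂ _ key1
        _ ≤ (β • (L x + u') + u) + u :=
            aux_addc hoc₂ _ (aux_add_le_add hoc₂ (hoc₂.2 β _ _ E2.1) hvsmall)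
        _ = (β • L x + u + u) + u := by rw [smul_add, hβu']
        _ = β • L x + (u + u + u) := by abel
        _ = β • L x + w := by rw [h3u]
    · calc β • L x ≤ β • (a n x + u') := hoc₂.2 β _ _ E2.2
        _ = β • a n x + u := by rw [smul_add, hβu']
        _ ≤ (a n (β • x) + ((2:ℝ≥0)^n)⁻¹ • v) + u := aux_addc hoc₂ _ key2
        _ ≤ ((L (β • x) + u) + u) + u :=
            aux_addc hoc₂ _ (aux_add_le_add hoc₂ E1.1 hvsmall)
        _ = L (β • x) + (u + u + u) := by abel
        _ = L (β • x) + w := by rw [h3u]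
  refine ⟨L, hadd, fun α x hα => hhom α x hα, ⟨2, by norm_num, hclose⟩, ?_⟩
  -- uniqueness
  rintro L' hadd' hhom' ⟨γ', hγ', hγ'c⟩
  funext x
  apply aux_sep hsep hV₂ hoc₂
  intro w hw
  obtain ⟨c, hc, hcs⟩ := hsmall w hw
  set δ : ℝ≥0 := γ' + 2 with hδ_def
  have hLL' : ∀ z : P₁, L' z ≤ L z + δ • v ∧ L z ≤ L' z + δ • v := by
    intro z
    have h1 := hγ'c z
    have h2 := hclose z
    constructor
    · calc L' z ≤ f z + γ' • v := h1.1
        _ ≤ (L z + (2:ℝ≥0) • v) + γ' • v := aux_addc hoc₂ _ h2.2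
        _ = L z + δ • v := by rw [add_assoc, ← add_smul, hδ_def, add_comm γ' 2]
    · calc L z ≤ f z + (2:ℝ≥0) • v := h2.1
        _ ≤ (L' z + γ' • v) + (2:ℝ≥0) • v := aux_addc hoc₂ _ h1.2
        _ = L' z + δ • v := by rw [add_assoc, ← add_smul, hδ_def]
  obtain ⟨n, hn⟩ : ∃ n : ℕ, δ * c < 2^n := pow_unbounded_of_one_lt _ one_lt_two
  have hp : (0:ℝ≥0) < 2^n := pow_pos two_pos n
  have hpne : ((2:ℝ≥0)^n) ≠ 0 := hp.ne'
  have hvsm : (((2:ℝ≥0)^n)⁻¹ * δ) • v ≤ w := by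
    apply hcs
    calc ((2:ℝ≥0)^n)⁻¹ * δ * c = (δ * c) * ((2:ℝ≥0)^n)⁻¹ := by ring
      _ ≤ (2:ℝ≥0)^n * ((2:ℝ≥0)^n)⁻¹ := mul_le_mul_left hn.le _
      _ = 1 := mul_inv_cancel₀ hpne
  have hL2 : L ((2:ℝ≥0)^n • x) = (2:ℝ≥0)^n • L x := hhom _ _ hp
  have hL'2 : L' ((2:ℝ≥0)^n • x) = (2:ℝ≥0)^n • L' x := hhom' _ _ hp
  have shrink : ∀ p q : P₂, (2:ℝ≥0)^n • p ≤ (2:ℝ≥0)^n • q + δ • v →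
      p ≤ q + (((2:ℝ≥0)^n)⁻¹ * δ) • v := by
    intro p q h
    have h2 := hoc₂.2 ((2:ℝ≥0)^n)⁻¹ _ _ h
    rw [smul_add, inv_smul_smul₀ hpne, inv_smul_smul₀ hpne, smul_smul] at h2
    exact h2
  have hz := hLL' ((2:ℝ≥0)^n • x)
  rw [hL2, hL'2] at hz
  constructor
  · calc L' x ≤ L x + (((2:ℝ≥0)^n)⁻¹ * δ) • v := shrink _ _ hz.1
      _ ≤ L x + w := aux_add_le_add hoc₂ le_rfl hvsm
  · calc L x ≤ L' x + (((2:ℝ≥0)^n)⁻¹ * δ) • v := shrink _ _ hz.2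
      _ ≤ L' x + w := aux_add_le_add hoc₂ le_rfl hvsm
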